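/- arXiv:2512.08357 — 5 statements merged into one kernel-verified Lean document; each statement's English description precedes it below -/
import Mathlib

section
/- The family (T_n)_{n ≥ 1} is linearly independent over ℚ in 𝒢: for every finite set S of positive integers and rational numbers (c_n)_{n ∈ S}, if ∑_{n ∈ S} c_n · T_n = 0 in 𝒢 then c_n = 0 for every n ∈ S. In particular, for every N ≥ 1 the elements (T_k)_{k | N} form a basis of the ℚ-subspace of 𝒢 that they span. -/
/-!
If `∑ c_n T_n = 0` with some `c_n ≠ 0`, let `N` be the largest such index and read off the
coefficient at a point `τ ∈ G` of exact order `N`. Since `m • τ = 0` iff `N ∣ m`, among the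
indices `m ≤ N` only `T_N` has `τ` in its support, so `c_N N^{-r} = 0`, a contradiction.
-/

noncomputable section

/-- `G = (ℝ/ℤ)^r`. -/
abbrev Gr (r : ℕ) : Type := Fin r → AddCircle (1 : ℝ)

/-- The group algebra `𝒢 = ℚ[G]`. -/
abbrev GA (r : ℕ) : Type := AddMonoidAlgebra ℚ (Gr r)

/-- `T_n := n^{-r} • ∑_{τ : n • τ = 0} (τ)`, the average of the `n`-torsion
elements of `G`. -/
noncomputable def Tor (r n : ℕ) : GA r :=
  ((n : ℚ) ^ r)⁻¹ • ∑ᶠ τ ∈ {τ : Gr r | n • τ = 0}, AddMonoidAlgebra.single τ (1 : ℚ)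

theorem linearIndepOn_of_triangular {R M ι : Type*} [Ring R] [NoZeroDivisors R]
    [AddCommGroup M] [Module R M] [LinearOrder ι] {v : ι → M} {s : Set ι}
    (h : ∀ i ∈ s, ∃ f : M →ₗ[R] R, f (v i) ≠ 0 ∧ ∀ j ∈ s, j < i → f (v j) = 0) :
    LinearIndepOn R v s := by
  classical
  refine linearIndepOn_iff'.2 fun t g hts hsum => ?_
  by_contra! hg
  have hne : (t.filter (g · ≠ 0)).Nonempty := by simpa [Finset.filter_nonempty_iff] using hg
  set i := (t.filter (g · ≠ 0)).max' hne
  obtain ⟨hit, hgi⟩ := Finset.mem_filter.1 ((t.filter (g · ≠ 0)).max'_mem hne)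
  obtain ⟨f, hfi, hflt⟩ := h i (hts hit)
  have : ∑ j ∈ t, g j * f (v j) = g i * f (v i) := by
    refine Finset.sum_eq_single_of_mem i hit fun j hjt hji => ?_
    by_cases hgj : g j = 0
    · rw [hgj, zero_mul]
    · have hj : j ≤ i := Finset.le_max' _ j (Finset.mem_filter.2 ⟨hjt, hgj⟩)
      rw [hflt j (hts hjt) (lt_of_le_of_ne hj hji), mul_zero]
  have hfsum := congrArg f hsum
  simp only [map_sum, map_smul, smul_eq_mul, map_zero, this] at hfsum
  exact mul_ne_zero hgi hfi hfsum

theorem Set.Finite.setOf_nsmul_eq_zero_pi {ι A : Type*} [Finite ι] [AddMonoid A] {n : ℕ}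
    (h : {a : A | n • a = 0}.Finite) : {x : ι → A | n • x = 0}.Finite :=
  (Set.Finite.pi fun _ => h).subset fun _ hx i _ => congrFun hx i

theorem coeff_Tor {r n : ℕ} (hn : 0 < n) (τ : Gr r) :
    (Tor r n).coeff τ = if n • τ = 0 then ((n : ℚ) ^ r)⁻¹ else 0 := by
  have hfin : {τ : Gr r | n • τ = 0}.Finite :=
    Set.Finite.setOf_nsmul_eq_zero_pi (AddCircle.finite_torsion 1 hn)
  rw [Tor, ← hfin.coe_toFinset, finsum_mem_coe_finset]
  simp [AddMonoidAlgebra.coeff_sum, AddMonoidAlgebra.coeff_single, Finsupp.single_apply]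

theorem exists_addOrderOf_eq {r N : ℕ} (hr : 0 < r) (hN : 0 < N) :
    ∃ τ : Gr r, addOrderOf τ = N := by
  let i : Fin r := ⟨0, hr⟩
  have h := addOrderOf_injective (AddMonoidHom.single (fun _ : Fin r => AddCircle (1 : ℝ)) i)
    (Pi.single_injective (M := fun _ => AddCircle (1 : ℝ)) i) ((1 / N : ℝ) : AddCircle (1 : ℝ))
  exact ⟨_, h.trans (AddCircle.addOrderOf_period_div hN)⟩

theorem linearIndepOn_Tor {r : ℕ} (hr : 0 < r) : LinearIndepOn ℚ (Tor r) {n | 0 < n} := by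
  refine linearIndepOn_of_triangular fun N hN => ?_
  obtain ⟨τ, hτ⟩ := exists_addOrderOf_eq hr hN
  let f : GA r →ₗ[ℚ] ℚ := Finsupp.lapply τ ∘ₗ (AddMonoidAlgebra.coeffLinearEquiv ℚ).toLinearMap
  have hf : ∀ m, 0 < m → f (Tor r m) = if N ∣ m then ((m : ℚ) ^ r)⁻¹ else 0 := fun m hm => by
    simp [f, coeff_Tor hm, ← hτ, addOrderOf_dvd_iff_nsmul_eq_zero]
  refine ⟨f, ?_, fun m hm hmN => ?_⟩
  · rw [hf N hN, if_pos dvd_rfl]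
    exact inv_ne_zero (pow_ne_zero _ (Nat.cast_ne_zero.2 hN.ne'))
  · rw [hf m hm, if_neg (Nat.not_dvd_of_pos_of_lt hm hmN)]

/-- The family `(T_n)_{n ≥ 1}` is linearly independent over ℚ in `𝒢`.  In
particular, for every `N ≥ 1` the family `(T_k)_{k ∣ N}` is linearly
independent (hence a basis of the ℚ-subspace it spans). -/
theorem statement2 (r : ℕ) (hr : 1 ≤ r) :
    (∀ S : Finset ℕ, (∀ n ∈ S, 1 ≤ n) → ∀ c : ℕ → ℚ,
      (∑ n ∈ S, c n • Tor r n) = 0 → ∀ n ∈ S, c n = 0) ∧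
    (∀ N : ℕ, 1 ≤ N → LinearIndependent ℚ (fun k : N.divisors => Tor r k)) :=
  ⟨fun S hS c => linearIndepOn_iff'.1 (linearIndepOn_Tor hr) S c hS,
    fun _ _ => (linearIndepOn_Tor hr).mono fun _ => Nat.pos_of_mem_divisors⟩

end
end

section
/- The refined divisor-sum is multiplicative: for all integers δ, a ≥ 1 and every integer m ≥ 0, σ^δ_m(a) = ∏_p σ^{p^{ν_p(δ)}}_m(p^{ν_p(a)}) in 𝒢, where the (finite) product runs over the primes p dividing δ·a and ν_p denotes the p-adic valuation (for primes p not dividing δ·a the corresponding factor is σ^1_m(1) = T_1 = (0), the identity of 𝒢). -/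
/-!
`T_n` is the normalised sum `e_H = |H|⁻¹ ∑_{h ∈ H} (h)` of the finite subgroup `H = G[n]`, and
for finite subgroups `e_H e_K = e_{H+K}`: every element of `H + K` is hit by `|H ∩ K|` pairs
`(h, k)`, and `|H| |K| = |H ∩ K| |H + K|`. For coprime `m, n`, Bézout gives `G[m] + G[n] = G[mn]`,
hence `T_{mn} = T_m T_n`. When `δ₁ a₁` and `δ₂ a₂` are coprime, a divisor of `a₁ a₂` splits
uniquely as `k₁ k₂` with `k_i ∣ a_i`, and the corresponding term of `σ^{δ₁δ₂}_m(a₁a₂)` is the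
product of the `k₁`-term of `σ^{δ₁}_m(a₁)` and the `k₂`-term of `σ^{δ₂}_m(a₂)`. So `σ` is
multiplicative in the pair `(δ, a)`, and splitting off one prime at a time gives the product.
-/

noncomputable section

/-- The refined divisor-sum `σ^δ_m(a) := ∑_{k ∣ a} (a/k)^m • T_{δ/gcd(δ,k)}`. -/
noncomputable def sigmaRef (r δ m a : ℕ) : GA r :=
  ∑ k ∈ a.divisors, ((a / k : ℕ) : ℚ) ^ m • Tor r (δ / Nat.gcd δ k)

open AddSubgroup AddMonoidAlgebra Finset

theorem AddMonoidHom.sum_comp_eq_card_ker_nsmul {A B M : Type*} [AddGroup A] [AddGroup B]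
    [Fintype B] [AddCommMonoid M] (φ : B →+ A) (f : A → M) :
    ∑ b, f (φ b) = Nat.card φ.ker • ∑ᶠ x ∈ (φ.range : Set A), f x := by
  classical
  have hker : Nat.card φ.ker = #{b | φ b = 0} := by
    rw [← Fintype.card_subtype, ← Nat.card_eq_fintype_card]
    exact Nat.card_congr (Equiv.subtypeEquivRight fun _ => φ.mem_ker)
  have hrange : (φ.range : Set A) = ↑(univ.image φ) := by simp
  rw [Finset.sum_comp, hrange, finsum_mem_coe_finset, Finset.smul_sum]
  refine Finset.sum_congr rfl fun x hx => ?_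
  obtain ⟨b, -, rfl⟩ := Finset.mem_image.1 hx
  rw [AddMonoidHom.card_fiber_eq_of_mem_range φ ⟨b, rfl⟩ ⟨0, map_zero φ⟩, hker]

theorem finsum_mem_coe_addSubgroup {A M : Type*} [AddGroup A] [AddCommMonoid M]
    (H : AddSubgroup A) [Fintype H] (f : A → M) :
    ∑ᶠ x ∈ (H : Set A), f x = ∑ x : H, f x := by
  rw [← finsum_eq_sum_of_fintype]
  exact (finsum_subtype_eq_finsum_cond (· ∈ H)).symm

section SubgroupSums

variable {A : Type*} [AddCommGroup A] (H K : AddSubgroup A)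

theorem AddSubgroup.range_subtype_coprod_subtype :
    (H.subtype.coprod K.subtype).range = H ⊔ K := by
  ext x
  simp [AddSubgroup.mem_sup]

theorem AddSubgroup.card_ker_subtype_coprod_subtype :
    Nat.card (H.subtype.coprod K.subtype).ker = Nat.card ↥(H ⊓ K) := by
  have hneg (p : (H.subtype.coprod K.subtype).ker) : -(p.1.2 : A) = p.1.1 :=
    neg_eq_of_add_eq_zero_left p.2
  refine Nat.card_congr
    { toFun := fun p => ⟨p.1.1, p.1.1.2, hneg p ▸ K.neg_mem p.1.2.2⟩
      invFun := fun x => ⟨(⟨x, x.2.1⟩, ⟨-x, K.neg_mem x.2.2⟩), by simp⟩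
      left_inv := fun p => ?_
      right_inv := fun _ => rfl }
  ext <;> simp [← hneg p]

theorem AddSubgroup.card_mul_card_eq_card_inf_mul_card_sup :
    Nat.card H * Nat.card K = Nat.card ↥(H ⊓ K) * Nat.card ↥(H ⊔ K) := by
  let φ := H.subtype.coprod K.subtype
  rw [← Nat.card_prod, card_eq_card_quotient_mul_card_addSubgroup φ.ker,
    Nat.card_congr (QuotientAddGroup.quotientKerEquivRange φ).toEquiv,
    range_subtype_coprod_subtype, card_ker_subtype_coprod_subtype, mul_comm]

theorem AddSubgroup.sum_add_eq_card_inf_nsmul {M : Type*} [AddCommMonoid M] [Fintype H]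
    [Fintype K] (f : A → M) :
    ∑ p : H × K, f (p.1 + p.2) =
      Nat.card ↥(H ⊓ K) • ∑ᶠ x ∈ ((H ⊔ K : AddSubgroup A) : Set A), f x := by
  have := (H.subtype.coprod K.subtype).sum_comp_eq_card_ker_nsmul f
  rwa [range_subtype_coprod_subtype, card_ker_subtype_coprod_subtype] at this

theorem finsum_single_mul_finsum_single (k : Type*) [Semiring k] [Finite H] [Finite K] :
    (∑ᶠ x ∈ (H : Set A), single x (1 : k)) * ∑ᶠ y ∈ (K : Set A), single y 1 =
      Nat.card ↥(H ⊓ K) • ∑ᶠ z ∈ ((H ⊔ K : AddSubgroup A) : Set A), single z 1 := by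
  have := Fintype.ofFinite H
  have := Fintype.ofFinite K
  rw [finsum_mem_coe_addSubgroup, finsum_mem_coe_addSubgroup, Finset.sum_mul_sum,
    ← Fintype.sum_prod_type', ← sum_add_eq_card_inf_nsmul]
  simp only [single_mul_single, mul_one]

variable (k : Type*) [Field k]

def subgroupAverage : AddMonoidAlgebra k A :=
  (Nat.card H : k)⁻¹ • ∑ᶠ x ∈ (H : Set A), single x 1

theorem subgroupAverage_mul [CharZero k] [Finite H] [Finite K] :
    subgroupAverage H k * subgroupAverage K k = subgroupAverage (H ⊔ K) k := by
  have hcard : (Nat.card H : k) * Nat.card K = Nat.card ↥(H ⊓ K) * Nat.card ↥(H ⊔ K) := by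
    exact_mod_cast card_mul_card_eq_card_inf_mul_card_sup H K
  have hH : (Nat.card H : k) ≠ 0 := by simp [Nat.card_pos.ne']
  have hK : (Nat.card K : k) ≠ 0 := by simp [Nat.card_pos.ne']
  have hsup : (Nat.card ↥(H ⊔ K) : k) ≠ 0 := right_ne_zero_of_mul (hcard ▸ mul_ne_zero hH hK)
  rw [subgroupAverage, subgroupAverage, subgroupAverage, smul_mul_smul_comm,
    finsum_single_mul_finsum_single, ← Nat.cast_smul_eq_nsmul k, smul_smul]
  congr 1
  field_simp
  linear_combination -hcard

theorem AddSubgroup.torsionBy_sup_torsionBy {m n : ℤ} (h : IsCoprime m n) :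
    torsionBy A m ⊔ torsionBy A n = torsionBy A (m * n) := by
  obtain ⟨u, v, huv⟩ := h
  refine le_antisymm (sup_le ?_ ?_) fun x hx => ?_
  · intro x (hx : m • x = 0)
    show (m * n) • x = 0
    rw [mul_comm, mul_smul, hx, smul_zero]
  · intro x (hx : n • x = 0)
    show (m * n) • x = 0
    rw [mul_smul, hx, smul_zero]
  · have hx : (m * n) • x = 0 := hx
    have hsplit : (v * n) • x + (u * m) • x = x := by
      rw [← add_smul, add_comm, huv, one_smul]
    rw [← hsplit]
    refine add_mem_sup (show m • (v * n) • x = 0 from ?_) (show n • (u * m) • x = 0 from ?_)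
    · rw [smul_smul, show m * (v * n) = v * (m * n) by ring, mul_smul, hx, smul_zero]
    · rw [smul_smul, show n * (u * m) = u * (m * n) by ring, mul_smul, hx, smul_zero]

theorem AddSubgroup.card_torsionBy_pi (ι : Type*) [Finite ι] (n : ℤ) :
    Nat.card (torsionBy (ι → A) n) = Nat.card (torsionBy A n) ^ Nat.card ι := by
  rw [← Nat.card_fun]
  refine Nat.card_congr ((Equiv.subtypeEquivRight fun x => ?_).trans Equiv.subtypePiEquivPi)
  show n • x = 0 ↔ ∀ i, n • x i = 0
  simp [funext_iff]

end SubgroupSums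

theorem UnitAddCircle.card_torsionBy {n : ℕ} (hn : n ≠ 0) :
    Nat.card (torsionBy UnitAddCircle n) = n := by
  have : NeZero n := ⟨hn⟩
  have hrange : (ZMod.toAddCircle (N := n)).range = torsionBy UnitAddCircle n := by
    ext u
    rw [AddMonoidHom.mem_range, torsionBy.nsmul_iff]
    constructor
    · rintro ⟨j, rfl⟩
      rw [← map_nsmul, nsmul_eq_mul, ZMod.natCast_self, zero_mul, map_zero]
    · intro hu
      obtain ⟨j, -, hj⟩ := (AddCircle.nsmul_eq_zero_iff (Nat.pos_of_ne_zero hn)).1 hu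
      exact ⟨j, by rw [ZMod.toAddCircle_natCast, ← hj, mul_one]⟩
  rw [← hrange, ← Nat.card_congr (AddMonoidHom.ofInjective (ZMod.toAddCircle_injective n)).toEquiv,
    Nat.card_zmod]

theorem card_torsionBy_Gr (r : ℕ) {n : ℕ} (hn : n ≠ 0) :
    Nat.card (torsionBy (Gr r) n) = n ^ r := by
  rw [card_torsionBy_pi, UnitAddCircle.card_torsionBy hn, Nat.card_eq_fintype_card,
    Fintype.card_fin]

instance (r n : ℕ) [NeZero n] : Finite (torsionBy (Gr r) n) :=
  Nat.finite_of_card_ne_zero <| by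
    rw [card_torsionBy_Gr r (NeZero.ne n)]
    exact pow_ne_zero r (NeZero.ne n)

theorem Tor_eq_subgroupAverage (r : ℕ) {n : ℕ} (hn : n ≠ 0) :
    Tor r n = subgroupAverage (torsionBy (Gr r) n) ℚ := by
  have hset : {τ : Gr r | n • τ = 0} = torsionBy (Gr r) n := by
    ext τ
    exact torsionBy.nsmul_iff.symm
  rw [Tor, subgroupAverage, card_torsionBy_Gr r hn, hset, Nat.cast_pow]

theorem Tor_one (r : ℕ) : Tor r 1 = 1 := by
  have h : {τ : Gr r | (1 : ℕ) • τ = 0} = {0} := by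
    ext τ
    simp
  rw [Tor, h, finsum_mem_singleton]
  simp [AddMonoidAlgebra.one_def]

theorem Tor_mul_of_coprime (r : ℕ) {m n : ℕ} (h : m.Coprime n) :
    Tor r (m * n) = Tor r m * Tor r n := by
  rcases eq_or_ne m 0 with rfl | hm
  · simp [(Nat.coprime_zero_left n).1 h, Tor_one]
  rcases eq_or_ne n 0 with rfl | hn
  · simp [(Nat.coprime_zero_right m).1 h, Tor_one]
  have : NeZero m := ⟨hm⟩
  have : NeZero n := ⟨hn⟩
  rw [Tor_eq_subgroupAverage r (mul_ne_zero hm hn), Tor_eq_subgroupAverage r hm,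
    Tor_eq_subgroupAverage r hn, subgroupAverage_mul,
    torsionBy_sup_torsionBy (Nat.isCoprime_iff_coprime.2 h), Nat.cast_mul]

theorem Nat.Coprime.sum_divisors_mul_eq_sum_product {M : Type*} [AddCommMonoid M] {a₁ a₂ : ℕ}
    (h : a₁.Coprime a₂) (f : ℕ → M) :
    ∑ k ∈ (a₁ * a₂).divisors, f k = ∑ p ∈ a₁.divisors ×ˢ a₂.divisors, f (p.1 * p.2) := by
  rw [Nat.divisors_mul, ← Finset.image_mul_product, Finset.sum_image h.mul_injOn_divisors]

theorem Nat.gcd_mul_mul_of_coprime {δ₁ δ₂ k₁ k₂ : ℕ} (h : (δ₁ * k₁).Coprime (δ₂ * k₂)) :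
    (δ₁ * δ₂).gcd (k₁ * k₂) = δ₁.gcd k₁ * δ₂.gcd k₂ := by
  rw [Nat.Coprime.gcd_mul _ h.coprime_mul_left.coprime_mul_left_right,
    Nat.Coprime.gcd_mul_right_cancel δ₁ h.symm.coprime_mul_left_right.coprime_mul_right,
    Nat.Coprime.gcd_mul_left_cancel δ₂ h.coprime_mul_right.coprime_mul_left_right]

theorem sigmaRef_mul (r m : ℕ) {δ₁ δ₂ a₁ a₂ : ℕ} (h : (δ₁ * a₁).Coprime (δ₂ * a₂)) :
    sigmaRef r (δ₁ * δ₂) m (a₁ * a₂) = sigmaRef r δ₁ m a₁ * sigmaRef r δ₂ m a₂ := by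
  have hδ : δ₁.Coprime δ₂ := h.coprime_mul_right.coprime_mul_right_right
  rw [sigmaRef, sigmaRef, sigmaRef, Finset.sum_mul_sum, ← Finset.sum_product',
    (h.coprime_mul_left.coprime_mul_left_right).sum_divisors_mul_eq_sum_product]
  refine Finset.sum_congr rfl fun ⟨k₁, k₂⟩ hk => ?_
  dsimp only
  obtain ⟨⟨hk₁, -⟩, ⟨hk₂, -⟩⟩ : (k₁ ∣ a₁ ∧ a₁ ≠ 0) ∧ (k₂ ∣ a₂ ∧ a₂ ≠ 0) := by
    simpa only [Finset.mem_product, Nat.mem_divisors] using hk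
  have hk : (δ₁ * k₁).Coprime (δ₂ * k₂) :=
    h.coprime_dvd_left (mul_dvd_mul_left δ₁ hk₁) |>.coprime_dvd_right (mul_dvd_mul_left δ₂ hk₂)
  have hquot : (δ₁ / δ₁.gcd k₁).Coprime (δ₂ / δ₂.gcd k₂) :=
    hδ.coprime_dvd_left (Nat.div_dvd_of_dvd (Nat.gcd_dvd_left _ _))
      |>.coprime_dvd_right (Nat.div_dvd_of_dvd (Nat.gcd_dvd_left _ _))
  rw [smul_mul_smul_comm, ← mul_pow, ← Nat.cast_mul, ← Tor_mul_of_coprime r hquot,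
    Nat.div_mul_div_comm hk₁ hk₂, Nat.div_mul_div_comm (Nat.gcd_dvd_left _ _)
    (Nat.gcd_dvd_left _ _), Nat.gcd_mul_mul_of_coprime hk]

theorem sigmaRef_one_one (r m : ℕ) : sigmaRef r 1 m 1 = 1 := by
  simp [sigmaRef, Tor_one]

section PrimeFactorisation

variable {M : Type*} [CommMonoid M] (f : ℕ → ℕ → M) (h_one : f 1 1 = 1)
  (h_mul : ∀ δ₁ δ₂ a₁ a₂, (δ₁ * a₁).Coprime (δ₂ * a₂) → f (δ₁ * δ₂) (a₁ * a₂) = f δ₁ a₁ * f δ₂ a₂)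
include h_one h_mul

theorem map_prod_pow_prod_pow_of_coprime_mul {S : Finset ℕ} (hS : ∀ p ∈ S, p.Prime)
    (e g : ℕ → ℕ) :
    f (∏ p ∈ S, p ^ e p) (∏ p ∈ S, p ^ g p) = ∏ p ∈ S, f (p ^ e p) (p ^ g p) := by
  classical
  induction S using Finset.induction_on with
  | empty => simpa using h_one
  | insert p S hpS ih =>
    have hp := hS p (Finset.mem_insert_self p S)
    have hS' : ∀ q ∈ S, q.Prime := fun q hq => hS q (Finset.mem_insert_of_mem hq)
    have hcop : (p ^ e p * p ^ g p).Coprime ((∏ q ∈ S, q ^ e q) * ∏ q ∈ S, q ^ g q) := by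
      rw [← pow_add, ← Finset.prod_mul_distrib]
      refine Nat.Coprime.prod_right fun q hq => ?_
      rw [← pow_add]
      exact Nat.coprime_pow_primes _ _ hp (hS' q hq) (ne_of_mem_of_not_mem hq hpS).symm
    rw [Finset.prod_insert hpS, Finset.prod_insert hpS, Finset.prod_insert hpS,
      h_mul _ _ _ _ hcop, ih hS']

theorem eq_prod_primeFactors_of_coprime_mul {δ a : ℕ} (hδ : δ ≠ 0) (ha : a ≠ 0) :
    f δ a = ∏ p ∈ (δ * a).primeFactors, f (p ^ δ.factorization p) (p ^ a.factorization p) := by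
  have hprod {n : ℕ} (hn : n ≠ 0) (hdvd : n ∣ δ * a) :
      ∏ p ∈ (δ * a).primeFactors, p ^ n.factorization p = n := by
    rw [← Finset.prod_subset (Nat.primeFactors_mono hdvd (mul_ne_zero hδ ha)) fun p _ hp => by
      rw [Finsupp.notMem_support_iff.1 (by rwa [Nat.support_factorization]), pow_zero],
      ← Nat.prod_primeFactors_pow_factorization hn]
  have := map_prod_pow_prod_pow_of_coprime_mul f h_one h_mul
    (S := (δ * a).primeFactors) (fun _ hp => Nat.prime_of_mem_primeFactors hp)
    δ.factorization a.factorization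
  rwa [hprod hδ (dvd_mul_right δ a), hprod ha (dvd_mul_left a δ)] at this

end PrimeFactorisation

theorem statement5_general (r : ℕ) (δ a m : ℕ) (hδ : 1 ≤ δ) (ha : 1 ≤ a) :
    sigmaRef r δ m a =
      ∏ p ∈ (δ * a).primeFactors,
        sigmaRef r (p ^ (δ.factorization p)) m (p ^ (a.factorization p)) :=
  eq_prod_primeFactors_of_coprime_mul (fun δ a => sigmaRef r δ m a) (sigmaRef_one_one r m)
    (fun _ _ _ _ h => sigmaRef_mul r m h) (Nat.one_le_iff_ne_zero.1 hδ)
    (Nat.one_le_iff_ne_zero.1 ha)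

/-- The refined divisor-sum is multiplicative:
`σ^δ_m(a) = ∏_{p ∣ δ·a prime} σ^{p^{ν_p(δ)}}_m(p^{ν_p(a)})`. -/
theorem statement5 (r : ℕ) (hr : 1 ≤ r) (δ a m : ℕ) (hδ : 1 ≤ δ) (ha : 1 ≤ a) :
    sigmaRef r δ m a =
      ∏ p ∈ (δ * a).primeFactors,
        sigmaRef r (p ^ (δ.factorization p)) m (p ^ (a.factorization p)) :=
  statement5_general r δ a m hδ ha

end
end

section
/- The sequence δ ↦ σ^δ_m(δ·a) satisfies the 0-multiple-cover formula; explicitly, for all integers δ, a ≥ 1 and every integer m ≥ 0, σ^δ_m(δ·a) = ∑_{l | δ} ( ∑_{k | l·a, gcd(k,l) = 1} (l·a/k)^m ) · T_l in 𝒢. In particular σ^δ_m(δa) lies in the ℚ-span of (T_l)_{l | δ}, and its coefficient on T_δ in this basis equals ∑_{k | a, gcd(k,δ)=1} (δa/k)^m. -/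
/-!
Group the divisors `k ∣ δa` by `g = gcd(δ, k)`. Putting `l = δ / g` and `k = g k'`, the map
`k ↦ (l, k')` is a bijection onto the pairs with `l ∣ δ`, `k' ∣ la` and `gcd(k', l) = 1`, with
inverse `(l, k') ↦ (δ / l) k'`; moreover `δa / k = la / k'`.
-/

noncomputable section

theorem Nat.gcd_div_mul_of_coprime {δ l k : ℕ} (hl : l ∣ δ) (hk : k.Coprime l) :
    δ.gcd (δ / l * k) = δ / l := by
  nth_rewrite 1 [← Nat.div_mul_cancel hl]
  rw [Nat.gcd_mul_left, Nat.Coprime.gcd_eq_one hk.symm, mul_one]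

theorem Nat.sum_divisors_mul_div_gcd {M : Type*} [AddCommMonoid M] (f : ℕ → ℕ → M) (δ a : ℕ) :
    ∑ k ∈ (δ * a).divisors, f (δ * a / k) (δ / δ.gcd k) =
      ∑ l ∈ δ.divisors, ∑ k ∈ (l * a).divisors.filter (fun k => k.gcd l = 1),
        f (l * a / k) l := by
  have hsplit {l : ℕ} (hl : l ∣ δ) : δ * a = δ / l * (l * a) := by
    rw [← mul_assoc, Nat.div_mul_cancel hl]
  have hquot_pos {l : ℕ} (hl : l ∣ δ) (hδ : δ ≠ 0) : 0 < δ / l :=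
    Nat.div_pos (Nat.le_of_dvd (Nat.pos_of_ne_zero hδ) hl)
      (Nat.pos_of_dvd_of_pos hl (Nat.pos_of_ne_zero hδ))
  rw [Finset.sum_sigma']
  symm
  refine Finset.sum_nbij' (fun p => δ / p.1 * p.2) (fun k => ⟨δ / δ.gcd k, k / δ.gcd k⟩)
    ?_ ?_ ?_ ?_ ?_
  all_goals simp only [Finset.mem_sigma, Finset.mem_filter, Nat.mem_divisors]
  · rintro ⟨l, k⟩ ⟨⟨hl, hδ⟩, ⟨hk, hla⟩, -⟩
    rw [hsplit hl]
    exact ⟨Nat.mul_dvd_mul_left _ hk, (hsplit hl) ▸ mul_ne_zero hδ (right_ne_zero_of_mul hla)⟩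
  · rintro k ⟨hk, hδa⟩
    obtain ⟨hδ, ha⟩ := mul_ne_zero_iff.1 hδa
    have hg : 0 < δ.gcd k := Nat.gcd_pos_of_pos_left k (Nat.pos_of_ne_zero hδ)
    refine ⟨⟨Nat.div_dvd_of_dvd (Nat.gcd_dvd_left δ k), hδ⟩, ⟨?_, ?_⟩,
      (Nat.coprime_div_gcd_div_gcd hg).symm⟩
    · rw [Nat.div_mul_right_comm (Nat.gcd_dvd_left δ k)]
      exact Nat.div_dvd_div (Nat.gcd_dvd_right δ k) hk
    · exact mul_ne_zero (hquot_pos (Nat.gcd_dvd_left δ k) hδ).ne' ha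
  · rintro ⟨l, k⟩ ⟨⟨hl, hδ⟩, -, hcop⟩
    rw [Nat.gcd_div_mul_of_coprime hl hcop, Nat.div_div_self hl hδ,
      Nat.mul_div_cancel_left k (hquot_pos hl hδ)]
  · rintro k ⟨-, hδa⟩
    rw [Nat.div_div_self (Nat.gcd_dvd_left δ k) (left_ne_zero_of_mul hδa),
      Nat.mul_div_cancel' (Nat.gcd_dvd_right δ k)]
  · rintro ⟨l, k⟩ ⟨⟨hl, hδ⟩, -, hcop⟩
    rw [Nat.gcd_div_mul_of_coprime hl hcop, Nat.div_div_self hl hδ, hsplit hl,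
      Nat.mul_div_mul_left _ _ (hquot_pos hl hδ)]

theorem statement6_general (r : ℕ) (δ a m : ℕ) :
    sigmaRef r δ m (δ * a) =
      ∑ l ∈ δ.divisors,
        (∑ k ∈ (l * a).divisors.filter (fun k => Nat.gcd k l = 1),
          ((l * a / k : ℕ) : ℚ) ^ m) • Tor r l ∧
    sigmaRef r δ m (δ * a) ∈
      Submodule.span ℚ {x : GA r | ∃ l ∈ δ.divisors, x = Tor r l} := by
  have hformula : sigmaRef r δ m (δ * a) = ∑ l ∈ δ.divisors,
      (∑ k ∈ (l * a).divisors.filter (fun k => Nat.gcd k l = 1),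
        ((l * a / k : ℕ) : ℚ) ^ m) • Tor r l := by
    simp only [sigmaRef, Finset.sum_smul]
    exact Nat.sum_divisors_mul_div_gcd (fun n l => ((n : ℚ) ^ m) • Tor r l) δ a
  refine ⟨hformula, hformula ▸ Submodule.sum_mem _ fun l hl => ?_⟩
  exact Submodule.smul_mem _ _ (Submodule.subset_span ⟨l, hl, rfl⟩)

/-- The sequence `δ ↦ σ^δ_m(δ·a)` satisfies the 0-multiple-cover formula:
`σ^δ_m(δ·a) = ∑_{l ∣ δ} (∑_{k ∣ l·a, gcd(k,l) = 1} (l·a/k)^m) • T_l`.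
In particular `σ^δ_m(δa)` lies in the ℚ-span of `(T_l)_{l ∣ δ}`. -/
theorem statement6 (r : ℕ) (hr : 1 ≤ r) (δ a m : ℕ) (hδ : 1 ≤ δ) (ha : 1 ≤ a) :
    sigmaRef r δ m (δ * a) =
      ∑ l ∈ δ.divisors,
        (∑ k ∈ (l * a).divisors.filter (fun k => Nat.gcd k l = 1),
          ((l * a / k : ℕ) : ℚ) ^ m) • Tor r l ∧
    sigmaRef r δ m (δ * a) ∈
      Submodule.span ℚ {x : GA r | ∃ l ∈ δ.divisors, x = Tor r l} :=
  statement6_general r δ a m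

end
end

section
/- Vanishing of the Möbius-twisted refined count of pairs for non-cyclic cotype: for every n ≥ 1 and all d₁ | d₂ | n with d₁ > 1, one has ∑_{K ≤ Z_n²} ∑_{H ≤ K, H of cotype (d₁,d₂)} μ(H,K) · T_K = 0 in ℚ[Z_n²], where the outer sum runs over all additive subgroups K of Z_n² and the inner sum over all additive subgroups H of K whose cotype in Z_n² is (d₁,d₂). -/
noncomputable section

/-- `T_K := |K|⁻¹ • ∑_{θ ∈ K} (θ)` in the group algebra `ℚ[Z_n²]`. -/
noncomputable def TK (n : ℕ) (K : AddSubgroup (ZMod n × ZMod n)) :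
    AddMonoidAlgebra ℚ (ZMod n × ZMod n) :=
  (Nat.card K : ℚ)⁻¹ •
    ∑ᶠ θ ∈ (K : Set (ZMod n × ZMod n)), AddMonoidAlgebra.single θ (1 : ℚ)

/-- A subgroup `H ≤ Z_n²` has cotype `(d₁,d₂)` if `Z_n²/H ≃ ZMod d₁ × ZMod d₂`
as additive groups. -/
def HasCotype (n : ℕ) (H : AddSubgroup (ZMod n × ZMod n)) (d₁ d₂ : ℕ) : Prop :=
  Nonempty (((ZMod n × ZMod n) ⧸ H) ≃+ (ZMod d₁ × ZMod d₂))

/-!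
After swapping the two sums it suffices to show `∑_{K ≥ H} μ(H,K) T_K = 0` for each `H` of
cotype `(d₁,d₂)`. The recursion defining `μ` forces it to agree with `IncidenceAlgebra.mu`, which
also satisfies the dual recursion `∑_{H ≤ K ≤ M} μ(H,K) = δ_{H,M}`. Expanding
`|G| T_K = ∑_{ψ ∈ Ĝ, K ≤ ker ψ} ψ` and swapping once more, the coefficient of the character `ψ`
becomes `∑_{H ≤ K ≤ ker ψ} μ(H,K)`, which vanishes unless `ker ψ = H`. That never happens: the
quotient by the kernel of a complex character embeds in `ℂˣ`, so it is cyclic, whereas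
`ZMod d₁ × ZMod d₂` is not cyclic when `1 < d₁ ∣ d₂`.
-/

open Finset

namespace IncidenceAlgebra

variable {𝕜 α : Type*} [Ring 𝕜] [PartialOrder α] [LocallyFiniteOrder α] [DecidableEq α]

theorem eq_mu_of_sum_Icc_left_eq_zero (f : α → α → 𝕜) (hf₁ : ∀ a, f a a = 1)
    (hf₂ : ∀ a b, a < b → ∑ x ∈ Icc a b, f x b = 0) {a b : α} (hab : a ≤ b) :
    f a b = mu 𝕜 a b := by
  obtain rfl | hlt := hab.eq_or_lt
  · rw [hf₁, mu_self]
  have hrec : f a b = -∑ x ∈ Ioc a b, f x b := by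
    rw [eq_neg_iff_add_eq_zero, add_sum_Ioc_eq_sum_Icc (f := (f · b)) hab, hf₂ a b hlt]
  rw [hrec, mu_eq_neg_sum_Ioc_of_ne hlt.ne]
  congr 1
  refine sum_congr rfl fun x hx => ?_
  have hx' := mem_Ioc.mp hx
  exact eq_mu_of_sum_Icc_left_eq_zero f hf₁ hf₂ hx'.2
termination_by #(Icc a b)
decreasing_by exact card_lt_card (Icc_ssubset_Icc_left hab hx'.1 le_rfl)

end IncidenceAlgebra

namespace AddChar

section ker
variable {G M : Type*} [AddGroup G] [Monoid M]

def ker (ψ : AddChar G M) : AddSubgroup G := ψ.toAddMonoidHom.ker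

@[simp] lemma mem_ker {ψ : AddChar G M} {x : G} : x ∈ ψ.ker ↔ ψ x = 1 := by
  simp [ker, AddMonoidHom.mem_ker]

end ker

variable {G : Type*} [AddCommGroup G]

lemma isAddCyclic_quotient_ker [Finite G] {R : Type*} [CommRing R] [IsDomain R]
    (ψ : AddChar G R) : IsAddCyclic (G ⧸ ψ.ker) := by
  set f := QuotientAddGroup.lift ψ.ker ψ.toAddMonoidHom le_rfl
  have hf : Function.Injective f := by
    intro p q hpq
    obtain ⟨a, rfl⟩ := QuotientAddGroup.mk_surjective p
    obtain ⟨b, rfl⟩ := QuotientAddGroup.mk_surjective q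
    replace hpq : ψ a = ψ b := hpq
    rw [QuotientAddGroup.eq, mem_ker, map_add_eq_mul, ← hpq, ← map_add_eq_mul, neg_add_cancel,
      map_zero_eq_one]
  refine isCyclic_multiplicative_iff.mp
    (isCyclic_of_injective_ringHom (AddMonoidHom.toMultiplicativeLeft f) ?_)
  rw [AddMonoidHom.coe_toMultiplicativeLeft]
  exact Additive.toMul.injective.comp (hf.comp Multiplicative.toAdd.injective)

open scoped Classical in
lemma sum_le_ker_apply_eq_ite [Fintype G] (K : AddSubgroup G) (x : G) :
    ∑ ψ : AddChar G ℂ with K ≤ ψ.ker, ψ x = if x ∈ K then (Nat.card (G ⧸ K) : ℂ) else 0 := by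
  have : Fintype (G ⧸ K) := Fintype.ofFinite _
  calc ∑ ψ : AddChar G ℂ with K ≤ ψ.ker, ψ x
      = ∑ χ : AddChar (G ⧸ K) ℂ, χ x := by
        refine sum_bij' (fun ψ hψ => toAddMonoidHomEquiv.symm
            (QuotientAddGroup.lift K ψ.toAddMonoidHom (mem_filter.mp hψ).2))
          (fun χ _ => χ.compAddMonoidHom (QuotientAddGroup.mk' K)) (by simp) ?_
          (fun _ _ => rfl) (fun χ _ => ?_) (fun _ _ => rfl)
        · intro χ _
          simp only [mem_filter, mem_univ, true_and]
          intro k hk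
          simp [(QuotientAddGroup.eq_zero_iff k).mpr hk]
        · ext q
          induction q using QuotientAddGroup.induction_on
          rfl
    _ = _ := by
        rw [sum_apply_eq_ite, Nat.card_eq_fintype_card]
        exact if_congr (QuotientAddGroup.eq_zero_iff x) rfl rfl

open scoped Classical in
lemma card_mul_ite_inv_card_eq_sum_le_ker [Fintype G] (K : AddSubgroup G) (x : G) :
    (Nat.card G : ℂ) * (if x ∈ K then (Nat.card K : ℂ)⁻¹ else 0)
      = ∑ ψ : AddChar G ℂ with K ≤ ψ.ker, ψ x := by
  have hK : (Nat.card K : ℂ) ≠ 0 := Nat.cast_ne_zero.mpr Nat.card_pos.ne'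
  rw [sum_le_ker_apply_eq_ite, K.card_eq_card_quotient_mul_card_addSubgroup]
  split_ifs
  · push_cast
    field_simp
  · rw [mul_zero]

end AddChar

open IncidenceAlgebra

open scoped Classical in
theorem AddSubgroup.sum_Ici_mu_mul_ite_inv_card_eq_zero {G : Type*} [AddCommGroup G] [Finite G]
    [LocallyFiniteOrder (AddSubgroup G)] {H : AddSubgroup G} (hH : ¬ IsAddCyclic (G ⧸ H))
    (x : G) :
    ∑ K ∈ Ici H, (mu ℤ H K : ℚ) * (if x ∈ K then (Nat.card K : ℚ)⁻¹ else 0) = 0 := by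
  cases nonempty_fintype G
  have hG : (Nat.card G : ℂ) ≠ 0 := Nat.cast_ne_zero.mpr Nat.card_pos.ne'
  have hker : ∀ ψ : AddChar G ℂ, H ≠ ψ.ker := fun ψ h =>
    hH (h ▸ AddChar.isAddCyclic_quotient_ker ψ)
  suffices h : (Nat.card G : ℂ) *
      ∑ K ∈ Ici H, (mu ℤ H K : ℂ) * (if x ∈ K then (Nat.card K : ℂ)⁻¹ else 0) = 0 by
    refine Rat.cast_injective (α := ℂ) ?_
    rw [Rat.cast_zero, ← (mul_eq_zero.mp h).resolve_left hG, Rat.cast_sum]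
    refine sum_congr rfl fun K _ => ?_
    split_ifs <;> simp
  calc (Nat.card G : ℂ) *
        ∑ K ∈ Ici H, (mu ℤ H K : ℂ) * (if x ∈ K then (Nat.card K : ℂ)⁻¹ else 0)
      = ∑ K ∈ Ici H, ∑ ψ : AddChar G ℂ with K ≤ ψ.ker, (mu ℤ H K : ℂ) * ψ x := by
        simp_rw [mul_sum, mul_left_comm (Nat.card G : ℂ),
          AddChar.card_mul_ite_inv_card_eq_sum_le_ker, mul_sum]
    _ = ∑ ψ : AddChar G ℂ, (∑ K ∈ Icc H ψ.ker, (mu ℤ H K : ℂ)) * ψ x := by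
        simp_rw [sum_mul]
        exact sum_comm' (by simp)
    _ = 0 := by
        refine sum_eq_zero fun ψ _ => ?_
        rw [← Int.cast_sum, sum_Icc_mu_right, if_neg (hker ψ), Int.cast_zero, zero_mul]

theorem ZMod.not_isAddCyclic_prod_of_dvd {d₁ d₂ : ℕ} (h : d₁ ∣ d₂) (hd₁ : 1 < d₁) :
    ¬ IsAddCyclic (ZMod d₁ × ZMod d₂) := by
  rw [AddGroup.isAddCyclic_prod_iff, Nat.card_zmod, Nat.card_zmod]
  rintro ⟨-, -, hcop⟩
  exact hd₁.ne' (hcop.eq_one_of_dvd h)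

open scoped Classical in
theorem TK_coeff (n : ℕ) [NeZero n] (K : AddSubgroup (ZMod n × ZMod n)) (x : ZMod n × ZMod n) :
    (TK n K).coeff x = if x ∈ K then (Nat.card K : ℚ)⁻¹ else 0 := by
  rw [TK, ← (K : Set (ZMod n × ZMod n)).coe_toFinset, finsum_mem_coe_finset,
    AddMonoidAlgebra.coeff_smul, Finsupp.smul_apply, AddMonoidAlgebra.coeff_sum,
    Finsupp.finsetSum_apply]
  simp [AddMonoidAlgebra.coeff_single, Finsupp.single_apply]

theorem statement15_general (n d₁ d₂ : ℕ) (hn : 1 ≤ n)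
    (h₁ : d₁ ∣ d₂) (hd₁ : 1 < d₁)
    (μ : AddSubgroup (ZMod n × ZMod n) → AddSubgroup (ZMod n × ZMod n) → ℤ)
    (hμ₁ : ∀ H, μ H H = 1)
    (hμ₂ : ∀ H K : AddSubgroup (ZMod n × ZMod n), H < K →
      (∑ᶠ L ∈ {L : AddSubgroup (ZMod n × ZMod n) | H ≤ L ∧ L ≤ K}, μ L K) = 0) :
    (∑ᶠ K : AddSubgroup (ZMod n × ZMod n),
      ∑ᶠ H ∈ {H : AddSubgroup (ZMod n × ZMod n) |
          H ≤ K ∧ HasCotype n H d₁ d₂}, (μ H K : ℚ) • TK n K) = 0 := by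
  classical
  have : NeZero n := ⟨by omega⟩
  have : Fintype (AddSubgroup (ZMod n × ZMod n)) := Fintype.ofFinite _
  let _ := Fintype.toLocallyFiniteOrder (α := AddSubgroup (ZMod n × ZMod n))
  have hμ : ∀ ⦃H K⦄, H ≤ K → μ H K = mu ℤ H K :=
    fun H K => eq_mu_of_sum_Icc_left_eq_zero μ hμ₁ fun H K hHK => by
      rw [← finsum_mem_coe_finset, coe_Icc]
      exact hμ₂ H K hHK
  have hswap : (∑ᶠ K : AddSubgroup (ZMod n × ZMod n),
      ∑ᶠ H ∈ {H : AddSubgroup (ZMod n × ZMod n) | H ≤ K ∧ HasCotype n H d₁ d₂},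
        (μ H K : ℚ) • TK n K)
      = ∑ H with HasCotype n H d₁ d₂, ∑ K ∈ Ici H, (μ H K : ℚ) • TK n K := by
    rw [finsum_eq_sum_of_fintype]
    simp_rw [← coe_filter_univ, finsum_mem_coe_finset]
    exact sum_comm' (by simp)
  rw [hswap]
  refine sum_eq_zero fun H hH => AddMonoidAlgebra.coeff_injective (Finsupp.ext fun x => ?_)
  obtain ⟨e⟩ := (mem_filter.mp hH).2
  have hH' : ¬ IsAddCyclic ((ZMod n × ZMod n) ⧸ H) :=
    e.isAddCyclic.not.mpr (ZMod.not_isAddCyclic_prod_of_dvd h₁ hd₁)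
  rw [AddMonoidAlgebra.coeff_sum, Finsupp.finsetSum_apply, AddMonoidAlgebra.coeff_zero,
    Finsupp.zero_apply, ← H.sum_Ici_mu_mul_ite_inv_card_eq_zero hH' x]
  refine sum_congr rfl fun K hK => ?_
  rw [AddMonoidAlgebra.coeff_smul, Finsupp.smul_apply, TK_coeff, hμ (mem_Ici.mp hK), smul_eq_mul]

/-- Vanishing of the Möbius-twisted refined count of pairs for non-cyclic
cotype: for `d₁ ∣ d₂ ∣ n` with `d₁ > 1`, for the Möbius function `μ` of the
lattice of additive subgroups of `Z_n²` (characterized by `μ(H,H) = 1` and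
`∑_{L : H ≤ L ≤ K} μ(L,K) = 0` for `H` a proper subgroup of `K`), one has
`∑_{K} ∑_{H ≤ K, H of cotype (d₁,d₂)} μ(H,K) • T_K = 0`. -/
theorem statement15 (n d₁ d₂ : ℕ) (hn : 1 ≤ n)
    (h₁ : d₁ ∣ d₂) (h₂ : d₂ ∣ n) (hd₁ : 1 < d₁)
    (μ : AddSubgroup (ZMod n × ZMod n) → AddSubgroup (ZMod n × ZMod n) → ℤ)
    (hμ₁ : ∀ H, μ H H = 1)
    (hμ₂ : ∀ H K : AddSubgroup (ZMod n × ZMod n), H < K →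
      (∑ᶠ L ∈ {L : AddSubgroup (ZMod n × ZMod n) | H ≤ L ∧ L ≤ K}, μ L K) = 0) :
    (∑ᶠ K : AddSubgroup (ZMod n × ZMod n),
      ∑ᶠ H ∈ {H : AddSubgroup (ZMod n × ZMod n) |
          H ≤ K ∧ HasCotype n H d₁ d₂}, (μ H K : ℚ) • TK n K) = 0 :=
  statement15_general n d₁ d₂ hn h₁ hd₁ μ hμ₁ hμ₂
end
end

section
/- For every n ≥ 1, every divisor ω of n, and every additive subgroup K ≤ Z_n² with quotient map q : Z_n² → Z_n²/K, the ω-twisted average T_K(ω) := (1/[Z_n² : K]) · ∑_{φ} (1/|K|) · ∑_{x ∈ Z_n², q(x) = φ((n/ω) mod n)} (x), where the outer sum runs over all additive group homomorphisms φ : ZMod n →+ Z_n²/K, satisfies T_K(ω) = T_K · T_ω in ℚ[Z_n²]. -/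
noncomputable section

/-- The `k`-torsion subgroup `{x ∈ Z_n² : k • x = 0}`. -/
def torsionSub (n k : ℕ) : AddSubgroup (ZMod n × ZMod n) where
  carrier := {x | k • x = 0}
  zero_mem' := smul_zero k
  add_mem' := by
    intro a b ha hb
    simp only [Set.mem_setOf_eq, smul_add] at *
    rw [ha, hb, add_zero]
  neg_mem' := by
    intro a ha
    simp only [Set.mem_setOf_eq, smul_neg] at *
    rw [ha, neg_zero]

/-- `T_ω := T_K` for `K` the `ω`-torsion subgroup of `Z_n²`. -/
noncomputable def Tk (n k : ℕ) : AddMonoidAlgebra ℚ (ZMod n × ZMod n) :=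
  TK n (torsionSub n k)

/-!
Since `n` kills `Q = Z_n²/K`, evaluation at `1` identifies `ZMod n →+ Q` with `Q`, and
`φ (n/ω) = m • φ 1` for `m = n/ω`. The normalised sum over the fibre of `q` above `q w` is the
translate `(w) * T_K`, so lifting the sum over `Q` to `Z_n²` turns the left side into
`|Z_n²|⁻¹ • ∑_z (m • z) * T_K`. Multiplication by `m` maps `Z_n²` onto the `ω`-torsion subgroup
with fibres of equal size, hence `|Z_n²|⁻¹ • ∑_z (m • z) = T_ω`.
-/

open AddMonoidAlgebra

theorem AddMonoidHom.finsum_comp_eq_card_ker_nsmul {A B M : Type*} [AddGroup A] [Finite A]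
    [AddGroup B] [AddCommMonoid M] (f : A →+ B) (h : B → M) :
    ∑ᶠ a, h (f a) = Nat.card f.ker • ∑ᶠ b ∈ (f.range : Set B), h b := by
  classical
  have := Fintype.ofFinite A
  rw [finsum_eq_sum_of_fintype, Finset.sum_comp, AddMonoidHom.coe_range, ← Set.image_univ,
    ← Finset.coe_univ, ← Finset.coe_image, finsum_mem_coe_finset, Finset.smul_sum]
  refine Finset.sum_congr rfl fun b hb => ?_
  rw [AddMonoidHom.card_fiber_eq_of_mem_range f (y := 0) (by simpa using hb) ⟨0, map_zero f⟩,
    Nat.card_eq_fintype_card, Fintype.card_subtype]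
  simp only [AddMonoidHom.mem_ker]

theorem AddMonoidHom.card_ker_mul_card_range {A B : Type*} [AddGroup A] [AddGroup B]
    (f : A →+ B) : Nat.card f.ker * Nat.card f.range = Nat.card A := by
  rw [← AddSubgroup.index_ker, AddSubgroup.card_mul_index]

theorem QuotientAddGroup.finsum_comp_mk' {G M : Type*} [AddGroup G] [Finite G] [AddCommMonoid M]
    (K : AddSubgroup G) [K.Normal] (h : G ⧸ K → M) :
    ∑ᶠ z, h (mk' K z) = Nat.card K • ∑ᶠ y, h y := by
  rw [(mk' K).finsum_comp_eq_card_ker_nsmul, ker_mk',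
    AddMonoidHom.range_eq_top.mpr (mk'_surjective K), AddSubgroup.coe_top, finsum_mem_univ]

theorem ZMod.addMonoidHom_eval_one_bijective {n : ℕ} {A : Type*} [AddGroup A]
    (hA : ∀ a : A, n • a = 0) : Function.Bijective fun φ : ZMod n →+ A => φ 1 := by
  refine ⟨fun φ ψ h => ?_, fun a => ?_⟩
  · ext x
    obtain ⟨k, rfl⟩ := ZMod.intCast_surjective x
    simp only [← zsmul_one, map_zsmul, h]
  · exact ⟨ZMod.lift n ⟨zmultiplesHom A a, by simpa using hA a⟩, by
      simpa using ZMod.lift_coe n ⟨zmultiplesHom A a, by simpa using hA a⟩ 1⟩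

theorem ZMod.exists_nsmul_eq_of_nsmul_eq_zero {n ω m : ℕ} [NeZero n] (hn : ω * m = n)
    {a : ZMod n} (ha : ω • a = 0) : ∃ b : ZMod n, m • b = a := by
  have hω : ω ≠ 0 := by rintro rfl; exact NeZero.ne n (by simp [← hn])
  obtain ⟨k, rfl⟩ : ∃ k : ℕ, (k : ZMod n) = a := ⟨a.val, ZMod.natCast_zmod_val a⟩
  rw [← Nat.cast_smul_eq_nsmul (ZMod n), smul_eq_mul, ← Nat.cast_mul, ZMod.natCast_eq_zero_iff,
    ← hn] at ha
  obtain ⟨c, rfl⟩ := (Nat.mul_dvd_mul_iff_left (Nat.pos_of_ne_zero hω)).mp ha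
  exact ⟨c, by rw [nsmul_eq_mul, Nat.cast_mul]⟩

theorem torsionSub_eq_range_nsmul {n ω m : ℕ} [NeZero n] (hn : ω * m = n) :
    torsionSub n ω = (nsmulAddMonoidHom m).range := by
  ext x
  constructor
  · intro hx
    obtain ⟨b₁, hb₁⟩ := ZMod.exists_nsmul_eq_of_nsmul_eq_zero hn (congrArg Prod.fst hx)
    obtain ⟨b₂, hb₂⟩ := ZMod.exists_nsmul_eq_of_nsmul_eq_zero hn (congrArg Prod.snd hx)
    exact ⟨(b₁, b₂), Prod.ext hb₁ hb₂⟩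
  · rintro ⟨z, rfl⟩
    show ω • m • z = 0
    rw [smul_smul, hn, ZModModule.char_nsmul_eq_zero]

section Average

variable {G : Type*} [AddCommGroup G]

-- The paper's `T_K`; `TK n K` and `Tk n ω` unfold to `K.average` and `(torsionSub n ω).average`.
def AddSubgroup.average (H : AddSubgroup G) : AddMonoidAlgebra ℚ G :=
  (Nat.card H : ℚ)⁻¹ • ∑ᶠ θ ∈ (H : Set G), single θ 1

theorem AddMonoidHom.average_range {A : Type*} [AddGroup A] [Finite A] (f : A →+ G) :
    f.range.average = (Nat.card A : ℚ)⁻¹ • ∑ᶠ a, AddMonoidAlgebra.single (f a) (1 : ℚ) := by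
  have hker : (Nat.card f.ker : ℚ) ≠ 0 := Nat.cast_ne_zero.mpr Nat.card_pos.ne'
  rw [f.finsum_comp_eq_card_ker_nsmul (AddMonoidAlgebra.single · 1), ← f.card_ker_mul_card_range,
    ← Nat.cast_smul_eq_nsmul ℚ, smul_smul, AddSubgroup.average, Nat.cast_mul, mul_inv_rev,
    mul_assoc, inv_mul_cancel₀ hker, mul_one]

theorem AddSubgroup.average_eq_finsum (H : AddSubgroup G) [Finite H] :
    H.average = (Nat.card H : ℚ)⁻¹ • ∑ᶠ θ : H, single (θ : G) 1 := by
  simpa only [H.range_subtype, H.coe_subtype] using H.subtype.average_range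

theorem AddSubgroup.single_mul_average (K : AddSubgroup G) [Finite K] (w : G) :
    single w 1 * K.average = (Nat.card K : ℚ)⁻¹ •
      ∑ᶠ x ∈ {x : G | QuotientAddGroup.mk' K x = QuotientAddGroup.mk' K w}, single x 1 := by
  let e : K ≃ {x : G | QuotientAddGroup.mk' K x = QuotientAddGroup.mk' K w} :=
    { toFun := fun θ => ⟨w + θ, QuotientAddGroup.mk_add_of_mem w θ.2⟩
      invFun := fun x => ⟨x - w, QuotientAddGroup.eq_iff_sub_mem.mp x.2⟩
      left_inv := fun θ => by ext; simp
      right_inv := fun x => by ext; simp }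
  rw [K.average_eq_finsum, mul_smul_comm, mul_finsum' _ _ (Set.toFinite _),
    ← finsum_set_coe_eq_finsum_mem, ← finsum_comp_equiv e]
  simp only [single_mul_single, mul_one]
  rfl

end Average

open QuotientAddGroup in
/-- The `ω`-twisted average
`T_K(ω) := [Z_n² : K]⁻¹ • ∑_{φ : ZMod n →+ Z_n²/K} |K|⁻¹ • ∑_{x : q(x) = φ(n/ω)} (x)`
equals `T_K · T_ω`. -/
theorem statement17 (n ω : ℕ) (hn : 1 ≤ n) (hω : ω ∣ n)
    (K : AddSubgroup (ZMod n × ZMod n)) :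
    ((K.index : ℚ)⁻¹ •
      ∑ᶠ φ : ZMod n →+ ((ZMod n × ZMod n) ⧸ K),
        (Nat.card K : ℚ)⁻¹ •
          ∑ᶠ x ∈ {x : ZMod n × ZMod n |
              QuotientAddGroup.mk' K x = φ (((n / ω : ℕ) : ZMod n))},
            AddMonoidAlgebra.single x (1 : ℚ)) = TK n K * Tk n ω := by
  have : NeZero n := ⟨by omega⟩
  obtain ⟨m, hm⟩ := hω
  have hm' : n / ω = m := by
    rw [hm, Nat.mul_div_cancel_left m (Nat.pos_of_ne_zero (by rintro rfl; omega))]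
  set g : (ZMod n × ZMod n) ⧸ K → AddMonoidAlgebra ℚ (ZMod n × ZMod n) := fun y =>
    (Nat.card K : ℚ)⁻¹ • ∑ᶠ x ∈ {x | mk' K x = y}, single x 1
  have hQ : ∀ y : (ZMod n × ZMod n) ⧸ K, n • y = 0 := by
    intro y
    obtain ⟨z, rfl⟩ := mk'_surjective K y
    rw [← map_nsmul, ZModModule.char_nsmul_eq_zero, map_zero]
  have hsum_hom : ∑ᶠ φ : ZMod n →+ _, g (φ ((n / ω : ℕ) : ZMod n)) = ∑ᶠ y, g (m • y) := by
    simp only [hm', ← nsmul_one, map_nsmul]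
    exact finsum_comp (g := fun y => g (m • y)) _ (ZMod.addMonoidHom_eval_one_bijective hQ)
  have hsum_quot : Nat.card K • ∑ᶠ y, g (m • y) =
      ∑ᶠ z, single (m • z) (1 : ℚ) * K.average := by
    rw [← finsum_comp_mk' K]
    simp only [← map_nsmul, K.single_mul_average]
    rfl
  have hcard : (K.index : ℚ)⁻¹ * (Nat.card K : ℚ)⁻¹ = (Nat.card (ZMod n × ZMod n) : ℚ)⁻¹ := by
    rw [← mul_inv, ← Nat.cast_mul, K.index_mul_card]
  calc _ = (K.index : ℚ)⁻¹ • ∑ᶠ φ : ZMod n →+ _, g (φ ((n / ω : ℕ) : ZMod n)) := rfl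
    _ = (K.index : ℚ)⁻¹ • (Nat.card K : ℚ)⁻¹ • ∑ᶠ z, single (m • z) (1 : ℚ) * K.average := by
      rw [hsum_hom, ← hsum_quot, ← Nat.cast_smul_eq_nsmul ℚ,
        inv_smul_smul₀ (Nat.cast_ne_zero.mpr Nat.card_pos.ne')]
    _ = ((Nat.card (ZMod n × ZMod n) : ℚ)⁻¹ • ∑ᶠ z, single (m • z) (1 : ℚ)) * K.average := by
      rw [smul_smul, hcard, ← finsum_mul' _ _ (Set.toFinite _), smul_mul_assoc]
    _ = (torsionSub n ω).average * K.average := by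
      rw [torsionSub_eq_range_nsmul hm.symm, AddMonoidHom.average_range]
      rfl
    _ = TK n K * Tk n ω := mul_comm _ _
end
end
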